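/- arXiv:1410.3843 — 7 statements merged into one kernel-verified Lean document; each statement's English description precedes it below -/
import Mathlib

section
/- Let V be a finite-dimensional vector space over a field K, let A ∈ GL(V), N ∈ End(V), and let c ∈ K be an element that is not a root of unity (i.e., c^k ≠ 1 for all k ≥ 1). If A N A⁻¹ = c · N, then N is nilpotent. -/
/-!
Conjugation by `A` does not change the characteristic polynomial, so `χ_N = χ_{c • N}`, and the
characteristic polynomial of `c • N` is `χ_N` with its roots scaled by `c`: its `i`-th coefficient
is `c ^ (n - i)` times that of `χ_N`. As `c` is not a root of unity, every coefficient of `χ_N`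
below the leading one vanishes, i.e. `χ_N = X ^ n`, which is nilpotency by Cayley–Hamilton.
-/

open Polynomial

namespace Polynomial

variable {R : Type*} [CommRing R]

theorem reverse_scaleRoots (p : R[X]) (c : R) :
    (p.scaleRoots c).reverse = p.reverse.comp (C c * X) := by
  ext j
  rw [coeff_reverse, natDegree_scaleRoots, coeff_scaleRoots, comp_C_mul_X_coeff, coeff_reverse]
  rcases le_or_gt j p.natDegree with hj | hj
  · rw [revAt_le hj, Nat.sub_sub_self hj]
  · rw [revAt_eq_self_of_lt hj, coeff_eq_zero_of_natDegree_lt hj, zero_mul, zero_mul]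

theorem eq_of_reverse_eq_of_natDegree_eq {p q : R[X]} (hrev : p.reverse = q.reverse)
    (hdeg : p.natDegree = q.natDegree) : p = q := by
  rw [← reflect_reflect (p := p) (N := p.natDegree), ← reverse, hrev, reverse, hdeg,
    reflect_reflect]

theorem Monic.eq_X_pow_of_scaleRoots_eq [IsDomain R] {p : R[X]} (hp : p.Monic) {c : R}
    (hc : ∀ k : ℕ, 1 ≤ k → c ^ k ≠ 1) (hfix : p.scaleRoots c = p) :
    p = X ^ p.natDegree := by
  ext i
  rw [coeff_X_pow]
  rcases lt_trichotomy i p.natDegree with hi | rfl | hi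
  · have hcoeff : p.coeff i * (c ^ (p.natDegree - i) - 1) = 0 := by
      rw [mul_sub, mul_one, sub_eq_zero, ← coeff_scaleRoots, hfix]
    rw [if_neg hi.ne, (mul_eq_zero.mp hcoeff).resolve_right
      (sub_ne_zero.mpr (hc _ (Nat.sub_pos_of_lt hi)))]
  · rw [if_pos rfl, hp.coeff_natDegree]
  · rw [if_neg hi.ne', coeff_eq_zero_of_natDegree_lt hi]

end Polynomial

namespace Matrix

variable {R n : Type*} [CommRing R] [Fintype n] [DecidableEq n]

theorem charpolyRev_smul (c : R) (M : Matrix n n R) :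
    (c • M).charpolyRev = M.charpolyRev.comp (C c * X) := by
  rw [charpolyRev, charpolyRev, comp_eq_aeval, AlgHom.map_det]
  congr 1
  ext i j : 1
  simp only [sub_apply, one_apply, smul_apply, map_apply, smul_eq_mul, AlgHom.mapMatrix_apply,
    X_mul_C, aeval_sub, apply_ite, map_one, map_zero, map_mul, aeval_C, algebraMap_eq, aeval_X,
    sub_right_inj]
  ring

theorem charpoly_smul (c : R) (M : Matrix n n R) :
    (c • M).charpoly = M.charpoly.scaleRoots c := by
  nontriviality R
  -- After reversal, scaling the roots by `c` becomes the substitution `X ↦ c X`, which is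
  -- visible directly on `charpolyRev M = det (1 - X • M)`.
  refine eq_of_reverse_eq_of_natDegree_eq ?_ ?_
  · rw [reverse_charpoly, reverse_scaleRoots, reverse_charpoly, charpolyRev_smul]
  · rw [natDegree_scaleRoots, charpoly_natDegree_eq_dim, charpoly_natDegree_eq_dim]

end Matrix

theorem LinearMap.charpoly_smul {R M : Type*} [CommRing R] [AddCommGroup M] [Module R M]
    [Module.Free R M] [Module.Finite R M] (c : R) (f : Module.End R M) :
    (c • f).charpoly = f.charpoly.scaleRoots c := by
  let b := Module.Free.chooseBasis R M
  rw [← charpoly_toMatrix f b, ← charpoly_toMatrix (c • f) b, map_smul, Matrix.charpoly_smul]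

/-- if `A` is an invertible endomorphism of a finite-dimensional vector
space `V`, `N` an endomorphism, and `c` is not a root of unity, then `A N A⁻¹ = c • N`
forces `N` to be nilpotent. -/
theorem nilpotent_of_twisted_commutation
    {K V : Type} [Field K] [AddCommGroup V] [Module K V] [FiniteDimensional K V]
    (A : (Module.End K V)ˣ) (N : Module.End K V) (c : K)
    (hc : ∀ k : ℕ, 1 ≤ k → c ^ k ≠ 1)
    (h : (A : Module.End K V) * N * ((A⁻¹ : (Module.End K V)ˣ) : Module.End K V) = c • N) :
    IsNilpotent N := by
  have hconj : (LinearMap.GeneralLinearGroup.toLinearEquiv A).conj N = c • N := by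
    rw [← h]
    rfl
  have hfix : N.charpoly.scaleRoots c = N.charpoly := by
    rw [← LinearMap.charpoly_smul, ← hconj, LinearEquiv.charpoly_conj]
  rw [LinearMap.isNilpotent_iff_charpoly, ← N.charpoly_natDegree]
  exact N.charpoly_monic.eq_X_pow_of_scaleRoots_eq hc hfix
end

section
/- Let G be a monoid (or group), K a field of characteristic zero, and let ρ₁, ρ₂ be two finite-dimensional semisimple representations of G over K with equal traces, i.e., trace ρ₁(g) = trace ρ₂(g) for all g ∈ G. Then ρ₁ and ρ₂ are isomorphic. -/
/-!
Since both modules are semisimple, `K[G]` may be replaced by its quotient by the annihilator of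
their product, a semisimple ring because it embeds in a finite power of that product. Over a
semisimple ring a simple module `S` is a left ideal `A e` with `e` idempotent, and `S` maps
nontrivially to `M` iff `e` acts nontrivially on `M`; since the trace of an idempotent is the
dimension of its image, in characteristic zero this happens iff `tr(e | M) ≠ 0`. Hence every
simple submodule of `M` embeds in `N`; splitting it off both sides leaves complements with equal
characters, and induction on the dimension concludes.
-/

open LinearMap Module

instance IsSemisimpleModule.prod {R M N : Type*} [Ring R] [AddCommGroup M] [Module R M]
    [AddCommGroup N] [Module R N] [IsSemisimpleModule R M] [IsSemisimpleModule R N] :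
    IsSemisimpleModule R (M × N) := by
  rw [← Submodule.topEquiv.isSemisimpleModule_iff, ← LinearMap.sup_range_inl_inr]
  exact .sup (.range _) (.range _)

theorem IsSemisimpleRing.of_faithfulSMul (K : Type*) {R : Type*} (P : Type*) [CommRing K]
    [Ring R] [Algebra K R] [AddCommGroup P] [Module K P] [Module R P] [IsScalarTower K R P]
    [Module.Finite K P] [IsSemisimpleModule R P] [FaithfulSMul R P] : IsSemisimpleRing R := by
  obtain ⟨n, s, hs⟩ := Module.Finite.exists_fin (R := K) (M := P)
  let F : R →ₗ[R] (Fin n → P) := LinearMap.pi fun i ↦ toSpanSingleton R P (s i)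
  refine IsSemisimpleModule.of_injective F fun r r' h ↦ eq_of_smul_eq_smul (α := P) fun p ↦ ?_
  have : Algebra.lsmul K K P r = Algebra.lsmul K K P r' := ext_on_range hs (congrFun h)
  exact congr($this p)

theorem IsSemisimpleModule.isSemisimpleRing_quotient_annihilator (K : Type*) {R P : Type*}
    [CommRing K] [Ring R] [Algebra K R] [AddCommGroup P] [Module K P] [Module R P]
    [IsScalarTower K R P] [Module.Finite K P] [IsSemisimpleModule R P] :
    IsSemisimpleRing (R ⧸ Module.annihilator R P) := by
  have hP := isTorsionBySet_annihilator R P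
  let _ := hP.module
  have := hP.isSemisimpleModule_iff.mpr ‹_›
  have : FaithfulSMul (R ⧸ Module.annihilator R P) P := by
    refine ⟨fun {x y} h ↦ ?_⟩
    obtain ⟨r, rfl⟩ := Ideal.Quotient.mk_surjective x
    obtain ⟨s, rfl⟩ := Ideal.Quotient.mk_surjective y
    refine Ideal.Quotient.eq.mpr (mem_annihilator.mpr fun p ↦ ?_)
    rw [sub_smul, sub_eq_zero]
    exact h p
  exact .of_faithfulSMul K P

section Character

variable (K A : Type*) {M N : Type*} [Field K] [Ring A] [Algebra K A]
  [AddCommGroup M] [Module K M] [Module A M] [IsScalarTower K A M]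
  [AddCommGroup N] [Module K N] [Module A N] [IsScalarTower K A N]

variable (M) in
noncomputable def Module.character : A →ₗ[K] K :=
  trace K M ∘ₗ (Algebra.lsmul K K M).toLinearMap

theorem Module.character_apply (a : A) :
    character K A M a = trace K M (Algebra.lsmul K K M a) :=
  rfl

instance Submodule.finiteDimensional_of_isScalarTower [FiniteDimensional K M]
    (p : Submodule A M) : FiniteDimensional K p :=
  inferInstanceAs (FiniteDimensional K (p.restrictScalars K))

variable {K A}

theorem LinearEquiv.character_eq (e : M ≃ₗ[A] N) : character K A M = character K A N := by
  ext a
  rw [character_apply, character_apply, ← trace_conj' _ (e.restrictScalars K)]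
  congr 1
  ext n
  simp

theorem Module.character_eq_add_of_isCompl [FiniteDimensional K M] {p q : Submodule A M}
    (h : IsCompl p q) (a : A) : character K A M a = character K A p a + character K A q a := by
  rw [← (Submodule.prodEquivOfIsCompl p q h).character_eq, character_apply, character_apply,
    character_apply, ← trace_prodMap']
  rfl

theorem Module.finrank_eq_of_character_eq [CharZero K] [FiniteDimensional K M]
    [FiniteDimensional K N] (h : character K A M = character K A N) :
    finrank K M = finrank K N := by
  simpa only [character_apply, map_one, trace_one, Nat.cast_inj] using congr($h 1)

theorem IsIdempotentElem.character_ne_zero_iff [CharZero K] [FiniteDimensional K M] {e : A}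
    (he : IsIdempotentElem e) : character K A M e ≠ 0 ↔ ∃ m : M, e • m ≠ 0 := by
  rw [character_apply, ne_eq, (he.map (Algebra.lsmul K K M)).trace_eq_zero_iff]
  simp [LinearMap.ext_iff]

theorem IsSemisimpleRing.exists_ne_zero_linearMap_of_character_eq [CharZero K]
    [IsSemisimpleRing A] [FiniteDimensional K M] [FiniteDimensional K N]
    (htr : character K A M = character K A N) {S : Type*} [AddCommGroup S] [Module A S]
    [IsSimpleModule A S] (f : S →ₗ[A] M) (hf : f ≠ 0) : ∃ g : S →ₗ[A] N, g ≠ 0 := by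
  obtain ⟨I, ⟨φ⟩⟩ := IsSemisimpleRing.exists_linearEquiv_ideal_of_isSimpleModule A S
  obtain ⟨e, he, rfl⟩ := IsSemisimpleRing.ideal_eq_span_idempotent I
  have : Nontrivial S := IsSimpleModule.nontrivial A S
  have he0 : e ≠ 0 := by
    rintro rfl
    obtain ⟨s, hs⟩ := exists_ne (0 : S)
    exact hs (φ.map_eq_zero_iff.mp (Subtype.ext (by simpa using (φ s).2)))
  set x := φ.symm ⟨e, Ideal.mem_span_singleton_self e⟩
  have hx : x ≠ 0 := by simpa [x] using he0
  have hex : e • x = x := by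
    apply φ.injective
    rw [map_smul, φ.apply_symm_apply]
    exact Subtype.ext he
  have hM : ∃ m : M, e • m ≠ 0 := by
    refine ⟨f x, ?_⟩
    rw [← map_smul, hex]
    exact (map_ne_zero_iff f (injective_of_ne_zero hf)).mpr hx
  obtain ⟨n, hn⟩ : ∃ n : N, e • n ≠ 0 :=
    he.character_ne_zero_iff.mp (htr ▸ he.character_ne_zero_iff.mpr hM)
  refine ⟨toSpanSingleton A N n ∘ₗ (Ideal.span {e}).subtype ∘ₗ φ.toLinearMap,
    fun h ↦ hn ?_⟩
  simpa [x] using congr($h x)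

theorem IsSemisimpleRing.nonempty_linearEquiv_of_character_eq [CharZero K] [IsSemisimpleRing A]
    [FiniteDimensional K M] [FiniteDimensional K N] (htr : character K A M = character K A N) :
    Nonempty (M ≃ₗ[A] N) := by
  induction hn : finrank K M using Nat.strong_induction_on generalizing M N with
  | _ n ih =>
  rcases subsingleton_or_nontrivial M with hM | hM
  · have : Subsingleton N := finrank_zero_iff.mp <| by
      rw [← finrank_eq_of_character_eq htr, finrank_zero_of_subsingleton]
    exact ⟨.ofSubsingleton M N⟩
  obtain ⟨S, hS⟩ := IsSemisimpleModule.exists_simple_submodule A M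
  have : Nontrivial S := IsSimpleModule.nontrivial A S
  obtain ⟨g, hg⟩ := exists_ne_zero_linearMap_of_character_eq htr S.subtype
    (ne_zero_of_injective S.injective_subtype)
  have eS : S ≃ₗ[A] range g := .ofInjective g (injective_of_ne_zero hg)
  obtain ⟨M', hM'⟩ := exists_isCompl S
  obtain ⟨N', hN'⟩ := exists_isCompl (range g)
  have htr' : character K A M' = character K A N' := by
    ext a
    have := congr($htr a)
    rwa [character_eq_add_of_isCompl hM', character_eq_add_of_isCompl hN', eS.character_eq,
      add_right_inj] at this
  have hlt : finrank K M' < n := by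
    have := ((Submodule.prodEquivOfIsCompl S M' hM').restrictScalars K).finrank_eq
    have : 0 < finrank K S := finrank_pos
    rw [finrank_prod] at *
    omega
  obtain ⟨e'⟩ := ih _ hlt htr' rfl
  exact ⟨(Submodule.prodEquivOfIsCompl S M' hM').symm ≪≫ₗ eS.prodCongr e' ≪≫ₗ
    Submodule.prodEquivOfIsCompl _ _ hN'⟩

theorem Module.nonempty_linearEquiv_of_character_eq [CharZero K] [IsSemisimpleModule A M]
    [IsSemisimpleModule A N] [FiniteDimensional K M] [FiniteDimensional K N]
    (htr : character K A M = character K A N) : Nonempty (M ≃ₗ[A] N) := by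
  let I := Module.annihilator A (M × N)
  have hM : IsTorsionBySet A M I := fun m a ↦ congr(Prod.fst $(mem_annihilator.mp a.2 (m, 0)))
  have hN : IsTorsionBySet A N I := fun n a ↦ congr(Prod.snd $(mem_annihilator.mp a.2 (0, n)))
  let _ := hM.module
  let _ := hN.module
  have : IsSemisimpleRing (A ⧸ I) := IsSemisimpleModule.isSemisimpleRing_quotient_annihilator K
  have := hM.isSemisimpleModule_iff.mpr ‹_›
  have := hN.isSemisimpleModule_iff.mpr ‹_›
  obtain ⟨e⟩ := IsSemisimpleRing.nonempty_linearEquiv_of_character_eq (A := A ⧸ I) (K := K)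
    (LinearMap.ext (Quotient.ind fun a ↦ congr($htr a)))
  exact ⟨e.restrictScalars A⟩

end Character

namespace Representation

variable {K G V W : Type*} [Field K] [Monoid G] [AddCommGroup V] [Module K V]
  [AddCommGroup W] [Module K W]

theorem character_asModule_of (ρ : Representation K G V) (g : G) :
    Module.character K (MonoidAlgebra K G) ρ.asModule (MonoidAlgebra.of K G g) =
      ρ.character g := by
  rw [Module.character_apply, ← trace_conj' _ ρ.asModuleEquiv, character, ← asAlgebraHom_of]
  rfl

theorem character_asModule_eq_of_character_eq {ρ₁ : Representation K G V}
    {ρ₂ : Representation K G W} (h : ρ₁.character = ρ₂.character) :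
    Module.character K (MonoidAlgebra K G) ρ₁.asModule =
      Module.character K (MonoidAlgebra K G) ρ₂.asModule :=
  MonoidAlgebra.lhom_ext' fun g ↦ LinearMap.ext_ring <|
    (character_asModule_of ρ₁ g).trans <| congr($h g).trans (character_asModule_of ρ₂ g).symm

end Representation

/-- Brauer–Nesbitt in characteristic zero: two finite-dimensional
semisimple representations of a monoid `G` over a field `K` of characteristic zero
with equal traces are isomorphic (as modules over the monoid algebra). -/
theorem brauer_nesbitt_char_zero
    {K G V W : Type} [Field K] [CharZero K] [Monoid G]
    [AddCommGroup V] [Module K V] [FiniteDimensional K V]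
    [AddCommGroup W] [Module K W] [FiniteDimensional K W]
    (ρ₁ : Representation K G V) (ρ₂ : Representation K G W)
    (h₁ : IsSemisimpleModule (MonoidAlgebra K G) ρ₁.asModule)
    (h₂ : IsSemisimpleModule (MonoidAlgebra K G) ρ₂.asModule)
    (htr : ∀ g : G, LinearMap.trace K V (ρ₁ g) = LinearMap.trace K W (ρ₂ g)) :
    Nonempty (ρ₁.asModule ≃ₗ[MonoidAlgebra K G] ρ₂.asModule) :=
  nonempty_linearEquiv_of_character_eq
    (Representation.character_asModule_eq_of_character_eq (funext htr))
end

section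
/- Let V be a finite-dimensional vector space over a field K and let N ∈ End(V) be nilpotent. Then there exists a unique increasing filtration (M_i)_{i ∈ ℤ} of V by subspaces such that: M_i = 0 for i sufficiently small, M_i = V for i sufficiently large, N(M_i) ⊆ M_{i−2} for all i, and for every k ≥ 0 the map N^k induces an isomorphism from the graded piece M_k/M_{k−1} onto M_{−k}/M_{−k−1}. -/
def IsMonodromyFiltration {K V : Type} [Field K] [AddCommGroup V] [Module K V]
    (N : Module.End K V) (M : ℤ → Submodule K V) : Prop :=
  Monotone M ∧
  (∃ a : ℤ, ∀ i ≤ a, M i = ⊥) ∧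
  (∃ b : ℤ, ∀ i, b ≤ i → M i = ⊤) ∧
  (∀ i : ℤ, ∀ v ∈ M i, N v ∈ M (i - 2)) ∧
  (∀ k : ℕ, Submodule.map (N ^ k) (M k) ⊔ M (-(k : ℤ) - 1) = M (-(k : ℤ))) ∧
  (∀ k : ℕ, ∀ v ∈ M (k : ℤ), (N ^ k) v ∈ M (-(k : ℤ) - 1) → v ∈ M ((k : ℤ) - 1))

namespace MonodromyAux

variable {K V : Type} [Field K] [AddCommGroup V] [Module K V]




lemma pow_mem {N : Module.End K V} {M : ℤ → Submodule K V}
    (h4 : ∀ i : ℤ, ∀ v ∈ M i, N v ∈ M (i - 2)) :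
    ∀ (k : ℕ) (i : ℤ) (v : V), v ∈ M i → (N ^ k) v ∈ M (i - 2 * k) := by
  intro k
  induction k with
  | zero => intro i v hv; simpa using hv
  | succ k ih =>
    intro i v hv
    have h := ih (i - 2) (N v) (h4 i v hv)
    have hap : (N ^ (k + 1)) v = (N ^ k) (N v) := by
      rw [pow_succ, Module.End.mul_apply]
    have hidx : i - 2 * ((k + 1 : ℕ) : ℤ) = i - 2 - 2 * (k : ℤ) := by push_cast; ring
    rw [hap, hidx]
    exact h

lemma eventual {N : Module.End K V} {M : ℤ → Submodule K V}
    (hM : IsMonodromyFiltration N M) {j : ℕ} (hj : N ^ j = 0) :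
    (∀ i : ℤ, (j : ℤ) - 1 ≤ i → M i = ⊤) ∧ (∀ i : ℤ, i ≤ -(j : ℤ) → M i = ⊥) := by
  obtain ⟨mono, ⟨a, ha⟩, ⟨b, hb⟩, h4, h5, h6⟩ := hM
  have hpow : ∀ k : ℕ, j ≤ k → N ^ k = 0 := by
    intro k hk
    obtain ⟨m, rfl⟩ := Nat.exists_eq_add_of_le hk
    rw [pow_add, hj, zero_mul]
  have hdown : ∀ k : ℕ, j ≤ k → M k ≤ M ((k : ℤ) - 1) := by
    intro k hk v hv
    exact h6 k v hv (by rw [hpow k hk]; simpa using Submodule.zero_mem _)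
  -- top part
  have htop : M ((j : ℤ) - 1) = ⊤ := by
    have key : ∀ d : ℕ, M ((j : ℤ) - 1 + d) ≤ M ((j : ℤ) - 1) := by
      intro d
      induction d with
      | zero => simp
      | succ d ih =>
        have h2 := hdown (j + d) (by omega)
        have e2 : ((j + d : ℕ) : ℤ) - 1 = (j : ℤ) - 1 + ((d : ℕ) : ℤ) := by push_cast; ring
        rw [e2] at h2
        have e1 : ((j + d : ℕ) : ℤ) = (j : ℤ) - 1 + (((d + 1 : ℕ)) : ℤ) := by push_cast; ring
        rw [e1] at h2
        exact h2.trans ih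
    rw [eq_top_iff]
    calc (⊤ : Submodule K V) = M ((j : ℤ) - 1 + (b - ((j : ℤ) - 1)).toNat) := by
          rw [hb _ (by omega)]
      _ ≤ M ((j : ℤ) - 1) := key _
  -- bottom part
  have hup : ∀ k : ℕ, j ≤ k → M (-(k : ℤ)) = M (-(k : ℤ) - 1) := by
    intro k hk
    have := h5 k
    rw [hpow k hk] at this
    rw [← this]
    have : Submodule.map (0 : Module.End K V) (M k) = ⊥ := Submodule.map_zero _
    rw [this, bot_sup_eq]
  have hbot : M (-(j : ℤ)) = ⊥ := by
    have key : ∀ d : ℕ, M (-(j : ℤ)) = M (-(j : ℤ) - d) := by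
      intro d
      induction d with
      | zero => simp
      | succ d ih =>
        have h2 := hup (j + d) (by omega)
        have e2 : -((( j + d : ℕ)) : ℤ) - 1 = -(j : ℤ) - (((d + 1 : ℕ)) : ℤ) := by push_cast; ring
        rw [e2] at h2
        have e1 : -(((j + d : ℕ)) : ℤ) = -(j : ℤ) - ((d : ℕ) : ℤ) := by push_cast; ring
        rw [e1] at h2
        exact ih.trans h2
    rw [key (-(j : ℤ) - a).toNat, ha]
    omega
  constructor
  · intro i hi; rw [eq_top_iff, ← htop]; exact mono hi
  · intro i hi; rw [eq_bot_iff, ← hbot]; exact mono hi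

lemma boundary {N : Module.End K V} {M : ℤ → Submodule K V}
    (hM : IsMonodromyFiltration N M) {e : ℕ} (he : N ^ (e + 1) = 0) :
    (∀ i : ℤ, (e : ℤ) ≤ i → M i = ⊤) ∧ (∀ i : ℤ, i ≤ -(e : ℤ) - 1 → M i = ⊥) ∧
    M ((e : ℤ) - 1) = LinearMap.ker (N ^ e) ∧ M (-(e : ℤ)) = LinearMap.range (N ^ e) := by
  obtain ⟨htop, hbot⟩ := eventual hM he
  have htop' : ∀ i : ℤ, (e : ℤ) ≤ i → M i = ⊤ := fun i hi => htop i (by push_cast; omega)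
  have hbot' : ∀ i : ℤ, i ≤ -(e : ℤ) - 1 → M i = ⊥ := fun i hi => hbot i (by push_cast; omega)
  obtain ⟨mono, _, _, h4, h5, h6⟩ := hM
  refine ⟨htop', hbot', ?_, ?_⟩
  · apply le_antisymm
    · intro v hv
      have := pow_mem h4 e ((e : ℤ) - 1) v hv
      rw [hbot' _ (by omega)] at this
      simpa using this
    · intro v hv
      refine h6 e v (by rw [htop' _ le_rfl]; trivial) ?_
      rw [LinearMap.mem_ker] at hv
      rw [hv]
      exact Submodule.zero_mem _
  · have := h5 e
    rw [htop' _ le_rfl, hbot' _ (by omega), Submodule.map_top, sup_bot_eq] at this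
    exact this.symm




variable {K V : Type} [Field K] [AddCommGroup V] [Module K V]

lemma exun_zero : ∃! M : ℤ → Submodule K V, IsMonodromyFiltration (0 : Module.End K V) M := by
  refine ⟨fun i => if 0 ≤ i then ⊤ else ⊥, ⟨?_, ⟨-1, ?_⟩, ⟨0, ?_⟩, ?_, ?_, ?_⟩, ?_⟩
  · intro i j hij
    by_cases hi : 0 ≤ i <;> by_cases hj : 0 ≤ j <;> simp [hi, hj] <;> omega
  · intro i hi; dsimp only; rw [if_neg (by omega)]
  · intro i hi; dsimp only; rw [if_pos (by omega)]
  · intro i v _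
    simp only [LinearMap.zero_apply]
    exact Submodule.zero_mem _
  · intro k
    dsimp only
    match k with
    | 0 => norm_num; exact LinearMap.range_eq_top.mpr fun x => ⟨x, rfl⟩
    | (k+1) =>
      rw [zero_pow (Nat.succ_ne_zero k), Submodule.map_zero, bot_sup_eq,
        if_neg (by push_cast; omega), if_neg (by push_cast; omega)]
  · intro k v hv h
    dsimp only at hv h ⊢
    match k with
    | 0 => simpa using h
    | (k+1) =>
      rw [if_pos (by push_cast; omega)]
      trivial
  · intro Mb hMb
    have hev := eventual hMb (j := 1) (by rw [pow_one])
    funext i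
    by_cases hi : 0 ≤ i
    · rw [if_pos hi, hev.1 i (by push_cast; omega)]
    · rw [if_neg hi, hev.2 i (by push_cast; omega)]



variable {K : Type} [Field K]

set_option maxHeartbeats 2000000 in
lemma exun_step {V : Type} [AddCommGroup V] [Module K V] (N : Module.End K V) (e : ℕ)
    (he1 : 1 ≤ e) (he : N ^ (e + 1) = 0)
    (IH : ∀ (W : Type) [AddCommGroup W] [Module K W] (Nw : Module.End K W),
      Nw ^ e = 0 → ∃! M : ℤ → Submodule K W, IsMonodromyFiltration Nw M) :
    ∃! M : ℤ → Submodule K V, IsMonodromyFiltration N M := by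
  have hNee : N ^ (e + e) = 0 := by
    have h : e + e = (e + 1) + (e - 1) := by omega
    rw [h, pow_add, he, zero_mul]
  have hcomm : ∀ z : V, N ((N ^ e) z) = (N ^ e) (N z) := by
    intro z
    rw [← Module.End.mul_apply, ← Module.End.mul_apply, ← pow_succ, ← pow_succ']
  set A : Submodule K V := LinearMap.ker (N ^ e) with hA
  set B : Submodule K V := LinearMap.range (N ^ e) with hB
  have hBA : B ≤ A := by
    rintro x ⟨y, rfl⟩
    simp only [hA, LinearMap.mem_ker, ← Module.End.mul_apply, ← pow_add, hNee,
      LinearMap.zero_apply]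
  have hNA : ∀ x ∈ A, N x ∈ A := by
    intro x hx
    simp only [hA, LinearMap.mem_ker] at hx ⊢
    rw [← hcomm, hx, map_zero]
  set Nr : Module.End K A := N.restrict hNA with hNr
  have hNrB' : B.comap A.subtype ≤ (B.comap A.subtype).comap Nr := by
    rintro ⟨x, hxA⟩ hx
    simp only [Submodule.mem_comap, Submodule.subtype_apply] at hx ⊢
    rw [hNr, LinearMap.restrict_coe_apply]
    obtain ⟨y, hy⟩ := hx
    exact ⟨N y, by rw [← hcomm, hy]⟩
  set π : A →ₗ[K] (A ⧸ B.comap A.subtype) := (B.comap A.subtype).mkQ with hπ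
  set N' : Module.End K (A ⧸ B.comap A.subtype) :=
    Submodule.mapQ (B.comap A.subtype) (B.comap A.subtype) Nr hNrB' with hN'
  have hπN : ∀ x : A, N' (π x) = π (Nr x) := by
    intro x
    rw [hπ, hN', Submodule.mkQ_apply, Submodule.mapQ_apply, Submodule.mkQ_apply]
  have hcoe : ∀ (k : ℕ) (x : A), (((Nr ^ k) x : A) : V) = (N ^ k) (x : V) := by
    intro k
    induction k with
    | zero => intro x; simp
    | succ k ih =>
      intro x
      rw [pow_succ, Module.End.mul_apply, pow_succ, Module.End.mul_apply, ih (Nr x), hNr,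
        LinearMap.restrict_coe_apply]
  have hπpow : ∀ (k : ℕ) (x : A), (N' ^ k) (π x) = π ((Nr ^ k) x) := by
    intro k
    induction k with
    | zero => intro x; simp
    | succ k ih =>
      intro x
      rw [pow_succ, Module.End.mul_apply, hπN x, ih (Nr x), ← Module.End.mul_apply, ← pow_succ]
  have hN'e : N' ^ e = 0 := by
    refine Submodule.linearMap_qext _ ?_
    ext x
    simp only [LinearMap.comp_apply, LinearMap.zero_comp, LinearMap.zero_apply]
    have h1 : (N' ^ e) (π x) = π ((Nr ^ e) x) := hπpow e x
    have h2 : (Nr ^ e) x = 0 := by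
      ext
      rw [hcoe e x]
      simpa using x.2
    rw [hπ] at h1
    rw [h1, h2, map_zero]
  -- more helpers
  have hπsur : Function.Surjective π := Submodule.mkQ_surjective _
  have hNvA : ∀ v : V, N v ∈ A := by
    intro v
    rw [hA, LinearMap.mem_ker, ← Module.End.mul_apply, ← pow_succ, he, LinearMap.zero_apply]
  have hApow : ∀ (m : ℕ) (v : V), v ∈ A → (N ^ m) v ∈ A := by
    intro m v hv
    rw [hA, LinearMap.mem_ker, ← Module.End.mul_apply, ← pow_add]
    have h1 : e + m = m + e := by ring
    rw [h1, pow_add, Module.End.mul_apply]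
    rw [hA, LinearMap.mem_ker] at hv
    rw [hv, map_zero]
  have hpow0 : ∀ k : ℕ, e + 1 ≤ k → N ^ k = 0 := by
    intro k hk
    obtain ⟨m, rfl⟩ := Nat.exists_eq_add_of_le hk
    rw [pow_add, he, zero_mul]
  have hN'pow0 : ∀ k : ℕ, e ≤ k → N' ^ k = 0 := by
    intro k hk
    obtain ⟨m, rfl⟩ := Nat.exists_eq_add_of_le hk
    rw [pow_add, hN'e, zero_mul]
  have hπcoe : ∀ (k : ℕ) (v : V) (hv : v ∈ A) (h2 : (N ^ k) v ∈ A),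
      π ⟨(N ^ k) v, h2⟩ = (N' ^ k) (π ⟨v, hv⟩) := by
    intro k v hv h2
    rw [hπpow]
    congr 1
    ext
    rw [hcoe]
  -- the inductive filtration
  obtain ⟨M', hM', huniq'⟩ := IH (A ⧸ Submodule.comap A.subtype B) N' hN'e
  obtain ⟨h'top, h'bot⟩ := eventual hM' hN'e
  have h'mono := hM'.1
  have h4' := hM'.2.2.2.1
  have h5' := hM'.2.2.2.2.1
  have h6' := hM'.2.2.2.2.2
  -- the lifting operator
  set L : Submodule K (A ⧸ Submodule.comap A.subtype B) → Submodule K V :=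
    fun S => Submodule.map A.subtype (S.comap π) with hLdef
  have hmemL : ∀ (S) (v : V), v ∈ L S ↔ ∃ hv : v ∈ A, π ⟨v, hv⟩ ∈ S := by
    intro S v
    rw [hLdef]
    simp only [Submodule.mem_map, Submodule.mem_comap, Submodule.subtype_apply]
    constructor
    · rintro ⟨⟨x, hx⟩, hS, rfl⟩; exact ⟨hx, hS⟩
    · rintro ⟨hv, hS⟩; exact ⟨⟨v, hv⟩, hS, rfl⟩
  have hLmono : Monotone L := fun S T h => Submodule.map_mono (Submodule.comap_mono h)
  have hLbot : L ⊥ = B := by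
    rw [hLdef]
    dsimp only
    rw [Submodule.comap_bot, hπ, Submodule.ker_mkQ, Submodule.map_comap_subtype,
      inf_eq_right.mpr hBA]
  have hLtop : L ⊤ = A := by
    rw [hLdef]
    dsimp only
    rw [Submodule.comap_top, Submodule.map_subtype_top]
  have hBleL : ∀ S, B ≤ L S := fun S => hLbot ▸ hLmono bot_le
  have hLleA : ∀ S, L S ≤ A := fun S => hLtop ▸ hLmono le_top
  have hLsup : ∀ S T, L (S ⊔ T) = L S ⊔ L T := by
    intro S T
    refine le_antisymm ?_ (sup_le (hLmono le_sup_left) (hLmono le_sup_right))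
    intro v hv
    rw [hmemL] at hv
    obtain ⟨hvA, hST⟩ := hv
    obtain ⟨s, hs, t, ht, hst⟩ := Submodule.mem_sup.mp hST
    obtain ⟨y, rfl⟩ := hπsur s
    refine Submodule.mem_sup.mpr ⟨(y : V), ?_, v - (y : V), ?_, by abel⟩
    · rw [hmemL]
      exact ⟨y.2, by rwa [Subtype.coe_eta]⟩
    · rw [hmemL]
      have hmem : v - (y : V) ∈ A := A.sub_mem hvA y.2
      refine ⟨hmem, ?_⟩
      have h1 : (⟨v - (y : V), hmem⟩ : A) = ⟨v, hvA⟩ - y := by ext; simp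
      have h2 : π ⟨v, hvA⟩ - π y = t := by rw [← hst]; abel
      rw [h1, map_sub, h2]
      exact ht
  -- the filtration on V
  set M : ℤ → Submodule K V :=
    fun i => if (e : ℤ) ≤ i then ⊤ else if i ≤ -(e : ℤ) - 1 then ⊥ else L (M' i) with hMdef
  have hMtop : ∀ i : ℤ, (e : ℤ) ≤ i → M i = ⊤ := by
    intro i hi; rw [hMdef]; dsimp only; rw [if_pos hi]
  have hMbot : ∀ i : ℤ, i ≤ -(e : ℤ) - 1 → M i = ⊥ := by
    intro i hi; rw [hMdef]; dsimp only; rw [if_neg (by omega), if_pos hi]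
  have hMmid : ∀ i : ℤ, -(e : ℤ) ≤ i → i ≤ (e : ℤ) - 1 → M i = L (M' i) := by
    intro i h1 h2; rw [hMdef]; dsimp only; rw [if_neg (by omega), if_neg (by omega)]
  have he1' : (1 : ℤ) ≤ (e : ℤ) := by exact_mod_cast he1
  -- property 1 : monotone
  have P1 : Monotone M := by
    intro i j hij
    by_cases hj1 : (e : ℤ) ≤ j
    · rw [hMtop j hj1]; exact le_top
    by_cases hi1 : i ≤ -(e : ℤ) - 1
    · rw [hMbot i hi1]; exact bot_le
    rw [hMmid i (by omega) (by omega), hMmid j (by omega) (by omega)]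
    exact hLmono (h'mono hij)
  -- property 4
  have P4 : ∀ i : ℤ, ∀ v ∈ M i, N v ∈ M (i - 2) := by
    intro i v hv
    by_cases h1 : (e : ℤ) + 2 ≤ i
    · rw [hMtop _ (by omega)]; trivial
    by_cases h2 : (e : ℤ) + 1 ≤ i
    · -- i = e + 1
      rw [hMmid (i - 2) (by omega) (by omega), h'top (i - 2) (by omega), hLtop]
      exact hNvA v
    by_cases h3 : (e : ℤ) ≤ i
    · -- i = e, use primitivity of M' at level e-1
      have hie : i = (e : ℤ) := by omega
      rw [hMmid (i - 2) (by omega) (by omega), hmemL]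
      refine ⟨hNvA v, ?_⟩
      have hc1 : ((e - 1 : ℕ) : ℤ) = (e : ℤ) - 1 := by
        rw [Nat.cast_sub he1, Nat.cast_one]
      have hmem : π ⟨N v, hNvA v⟩ ∈ M' (((e - 1 : ℕ) : ℤ)) := by
        rw [hc1, h'top _ (by omega)]; trivial
      have hker : (N' ^ (e - 1)) (π ⟨N v, hNvA v⟩) ∈ M' (-((e - 1 : ℕ) : ℤ) - 1) := by
        have hNe : (N ^ (e - 1)) (N v) = (N ^ e) v := by
          rw [← Module.End.mul_apply, ← pow_succ, Nat.sub_add_cancel he1]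
        have hAe : (N ^ (e - 1)) (N v) ∈ A := hApow _ _ (hNvA v)
        have h0 : (N' ^ (e - 1)) (π ⟨N v, hNvA v⟩) = π ⟨(N ^ (e - 1)) (N v), hAe⟩ :=
          (hπcoe (e - 1) (N v) (hNvA v) hAe).symm
        have hmemB : (⟨(N ^ (e - 1)) (N v), hAe⟩ : A) ∈ Submodule.comap A.subtype B := by
          simp only [Submodule.mem_comap, Submodule.subtype_apply]
          rw [hNe, hB]
          exact ⟨v, rfl⟩
        rw [h0, hπ, Submodule.mkQ_apply, (Submodule.Quotient.mk_eq_zero _).mpr hmemB]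
        exact Submodule.zero_mem _
      have := h6' (e - 1) _ hmem hker
      rw [hc1] at this
      have hi2 : i - 2 = (e : ℤ) - 1 - 1 := by omega
      rw [hi2]
      exact this
    by_cases h4 : -(e : ℤ) + 2 ≤ i
    · -- middle to middle
      rw [hMmid i (by omega) (by omega)] at hv
      rw [hmemL] at hv
      obtain ⟨hvA, hS⟩ := hv
      rw [hMmid (i - 2) (by omega) (by omega), hmemL]
      refine ⟨hNvA v, ?_⟩
      have h0 : π ⟨N v, hNvA v⟩ = N' (π ⟨v, hvA⟩) := by
        rw [hπN]
        exact congrArg π (by ext; simp [hNr, LinearMap.restrict_coe_apply])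
      rw [h0]
      exact h4' i _ hS
    by_cases h5 : -(e : ℤ) + 1 ≤ i
    · -- i = -e + 1 : show N v = 0
      rw [hMmid i (by omega) (by omega), hmemL] at hv
      obtain ⟨hvA, hS⟩ := hv
      have hc1 : ((e - 1 : ℕ) : ℤ) = (e : ℤ) - 1 := by
        rw [Nat.cast_sub he1, Nat.cast_one]
      have hie : i = -((e - 1 : ℕ) : ℤ) := by omega
      have h51 := h5' (e - 1)
      rw [h'bot (-((e - 1 : ℕ) : ℤ) - 1) (by omega), sup_bot_eq] at h51
      rw [hie, ← h51] at hS
      obtain ⟨y, hy, hyeq⟩ := Submodule.mem_map.mp hS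
      obtain ⟨w, rfl⟩ := hπsur y
      have hAw : (N ^ (e - 1)) (w : V) ∈ A := hApow _ _ w.2
      have h0 : (N' ^ (e - 1)) (π w) = π ⟨(N ^ (e - 1)) (w : V), hAw⟩ := by
        have h00 := hπcoe (e - 1) (w : V) w.2 hAw
        rw [Subtype.coe_eta] at h00
        exact h00.symm
      rw [h0] at hyeq
      have hdiff : (⟨v, hvA⟩ - ⟨(N ^ (e - 1)) (w : V), hAw⟩ : A) ∈ Submodule.comap A.subtype B := by
        rw [← Submodule.ker_mkQ (Submodule.comap A.subtype B), ← hπ, LinearMap.sub_mem_ker_iff]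
        exact hyeq.symm
      have hdiffB : v - (N ^ (e - 1)) (w : V) ∈ B := by simpa using hdiff
      obtain ⟨c, hc⟩ : ∃ c, (N ^ e) c = v - (N ^ (e - 1)) (w : V) := hdiffB
      have hveq : v = (N ^ e) c + (N ^ (e - 1)) (w : V) := by rw [hc]; abel
      rw [hMbot (i - 2) (by omega), Submodule.mem_bot, hveq, map_add]
      have hz1 : N ((N ^ e) c) = 0 := by
        rw [← Module.End.mul_apply, ← pow_succ', he, LinearMap.zero_apply]
      have hz2 : N ((N ^ (e - 1)) (w : V)) = 0 := by
        rw [← Module.End.mul_apply, ← pow_succ', Nat.sub_add_cancel he1]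
        exact w.2
      rw [hz1, hz2, add_zero]
    · -- i ≤ -e
      rw [hMbot (i - 2) (by omega), Submodule.mem_bot]
      by_cases h6 : -(e : ℤ) ≤ i
      · rw [hMmid i h6 (by omega), h'bot i (by omega), hLbot] at hv
        obtain ⟨c, rfl⟩ : ∃ c, (N ^ e) c = v := hv
        rw [← Module.End.mul_apply, ← pow_succ', he, LinearMap.zero_apply]
      · rw [hMbot i (by omega), Submodule.mem_bot] at hv
        rw [hv, map_zero]
  -- property 5
  have P5 : ∀ k : ℕ, Submodule.map (N ^ k) (M (k : ℤ)) ⊔ M (-(k : ℤ) - 1) = M (-(k : ℤ)) := by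
    intro k
    by_cases hk1 : e + 1 ≤ k
    · rw [hMtop (k : ℤ) (by exact_mod_cast Nat.le_of_succ_le hk1), hpow0 k hk1,
        Submodule.map_zero, hMbot (-(k : ℤ) - 1) (by push_cast; omega),
        hMbot (-(k : ℤ)) (by push_cast; omega), bot_sup_eq]
    by_cases hk2 : e ≤ k
    · have hke : k = e := by omega
      subst hke
      rw [hMtop (k : ℤ) le_rfl, hMbot (-(k : ℤ) - 1) (by omega),
        hMmid (-(k : ℤ)) (by omega) (by omega), h'bot (-(k : ℤ)) (by omega), hLbot,
        Submodule.map_top, sup_bot_eq, hB]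
    · -- k ≤ e - 1
      have hkz : (k : ℤ) ≤ (e : ℤ) - 1 := by push_cast; omega
      rw [hMmid (k : ℤ) (by omega) (by omega), hMmid (-(k : ℤ) - 1) (by omega) (by omega),
        hMmid (-(k : ℤ)) (by omega) (by omega), ← h5' k, hLsup]
      refine le_antisymm (sup_le ?_ le_sup_right) (sup_le ?_ le_sup_right)
      · -- map (N^k) (L (M' k)) ≤ L (map (N'^k) (M' k)) ≤ sup
        refine le_trans ?_ le_sup_left
        intro x hx
        obtain ⟨v, hv, rfl⟩ := Submodule.mem_map.mp hx
        rw [hmemL] at hv ⊢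
        obtain ⟨hvA, hS⟩ := hv
        refine ⟨hApow k v hvA, ?_⟩
        rw [hπcoe k v hvA (hApow k v hvA)]
        exact Submodule.mem_map_of_mem hS
      · -- L (map (N'^k) (M' k)) ≤ map (N^k) (L (M' k)) ⊔ L (M' (-k-1))
        intro x hx
        rw [hmemL] at hx
        obtain ⟨hxA, hS⟩ := hx
        obtain ⟨y, hy, hyeq⟩ := Submodule.mem_map.mp hS
        obtain ⟨w, rfl⟩ := hπsur y
        have hAw : (N ^ k) (w : V) ∈ A := hApow _ _ w.2
        have h0 : (N' ^ k) (π w) = π ⟨(N ^ k) (w : V), hAw⟩ := by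
          have h00 := hπcoe k (w : V) w.2 hAw
          rw [Subtype.coe_eta] at h00
          exact h00.symm
        rw [h0] at hyeq
        have hdiff : (⟨x, hxA⟩ - ⟨(N ^ k) (w : V), hAw⟩ : A) ∈ Submodule.comap A.subtype B := by
          rw [← Submodule.ker_mkQ (Submodule.comap A.subtype B), ← hπ,
            LinearMap.sub_mem_ker_iff]
          exact hyeq.symm
        have hdiffB : x - (N ^ k) (w : V) ∈ B := by simpa using hdiff
        refine Submodule.mem_sup.mpr ⟨(N ^ k) (w : V), ?_, x - (N ^ k) (w : V), ?_, by abel⟩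
        · refine Submodule.mem_map_of_mem ?_
          rw [hmemL]
          exact ⟨w.2, by rwa [Subtype.coe_eta]⟩
        · exact hBleL _ hdiffB
  -- property 6
  have P6 : ∀ k : ℕ, ∀ v ∈ M (k : ℤ), (N ^ k) v ∈ M (-(k : ℤ) - 1) → v ∈ M ((k : ℤ) - 1) := by
    intro k v hv hNk
    by_cases hk1 : e + 1 ≤ k
    · rw [hMtop ((k : ℤ) - 1) (by push_cast; omega)]; trivial
    by_cases hk2 : e ≤ k
    · have hke : k = e := by omega
      subst hke
      rw [hMbot (-(k : ℤ) - 1) (by omega), Submodule.mem_bot] at hNk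
      rw [hMmid ((k : ℤ) - 1) (by omega) (by omega), h'top ((k : ℤ) - 1) (by omega), hLtop,
        hA, LinearMap.mem_ker]
      exact hNk
    · -- k ≤ e - 1
      have hkz : (k : ℤ) ≤ (e : ℤ) - 1 := by push_cast; omega
      rw [hMmid (k : ℤ) (by omega) (by omega), hmemL] at hv
      obtain ⟨hvA, hS⟩ := hv
      rw [hMmid (-(k : ℤ) - 1) (by omega) (by omega), hmemL] at hNk
      obtain ⟨hNkA, hNkS⟩ := hNk
      rw [hπcoe k v hvA hNkA] at hNkS
      have := h6' k _ hS hNkS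
      rw [hMmid ((k : ℤ) - 1) (by omega) (by omega), hmemL]
      exact ⟨hvA, this⟩
  refine ⟨M, ⟨P1, ⟨-(e : ℤ) - 1, fun i hi => hMbot i hi⟩, ⟨(e : ℤ), fun i hi => hMtop i hi⟩,
    P4, P5, P6⟩, ?_⟩
  -- uniqueness
  intro Mb hMb
  obtain ⟨hbtop, hbbot, hbe1, hbne⟩ := boundary hMb he
  have bmono := hMb.1
  have hb4 := hMb.2.2.2.1
  have hb5 := hMb.2.2.2.2.1
  have hb6 := hMb.2.2.2.2.2
  have hMbA : ∀ i : ℤ, i ≤ (e : ℤ) - 1 → Mb i ≤ A := fun i hi =>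
    le_trans (bmono hi) (le_of_eq hbe1)
  have hBMb : ∀ i : ℤ, -(e : ℤ) ≤ i → B ≤ Mb i := fun i hi =>
    le_trans (le_of_eq hbne.symm) (bmono hi)
  set Mb' : ℤ → Submodule K (A ⧸ Submodule.comap A.subtype B) :=
    fun i => Submodule.map π ((Mb i).comap A.subtype) with hMb'def
  have hmemMb' : ∀ (i : ℤ) (x), x ∈ Mb' i ↔ ∃ w : A, (w : V) ∈ Mb i ∧ π w = x := by
    intro i x
    rw [hMb'def]
    simp only [Submodule.mem_map, Submodule.mem_comap, Submodule.subtype_apply]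
  have hb'mono : Monotone Mb' := fun i j hij =>
    Submodule.map_mono (Submodule.comap_mono (bmono hij))
  have hMb'top : ∀ i : ℤ, (e : ℤ) - 1 ≤ i → Mb' i = ⊤ := by
    intro i hi
    rw [eq_top_iff]
    intro x _
    obtain ⟨w, rfl⟩ := hπsur x
    have hAle : A ≤ Mb i := le_trans (le_of_eq hbe1.symm) (bmono hi)
    exact (hmemMb' _ _).mpr ⟨w, hAle w.2, rfl⟩
  have hMb'bot : ∀ i : ℤ, i ≤ -(e : ℤ) → Mb' i = ⊥ := by
    intro i hi
    rw [eq_bot_iff]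
    intro x hx
    obtain ⟨w, hw, rfl⟩ := (hmemMb' _ _).mp hx
    have hwB : (w : V) ∈ B := (le_trans (bmono hi) (le_of_eq hbne)) hw
    rw [Submodule.mem_bot, hπ, Submodule.mkQ_apply, Submodule.Quotient.mk_eq_zero]
    simp only [Submodule.mem_comap, Submodule.subtype_apply]
    exact hwB
  have hb4' : ∀ i : ℤ, ∀ x ∈ Mb' i, N' x ∈ Mb' (i - 2) := by
    intro i x hx
    obtain ⟨w, hw, rfl⟩ := (hmemMb' _ _).mp hx
    rw [hπN]
    refine (hmemMb' _ _).mpr ⟨Nr w, ?_, rfl⟩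
    have hcoe1 : ((Nr w : A) : V) = N (w : V) := by rw [hNr, LinearMap.restrict_coe_apply]
    rw [hcoe1]
    exact hb4 i _ hw
  have hb5' : ∀ k : ℕ, Submodule.map (N' ^ k) (Mb' (k : ℤ)) ⊔ Mb' (-(k : ℤ) - 1)
      = Mb' (-(k : ℤ)) := by
    intro k
    by_cases hk : e ≤ k
    · rw [hN'pow0 k hk, Submodule.map_zero, hMb'bot (-(k : ℤ) - 1) (by push_cast; omega),
        hMb'bot (-(k : ℤ)) (by push_cast; omega), bot_sup_eq]
    · refine le_antisymm (sup_le ?_ (hb'mono (by omega))) ?_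
      · intro x hx
        obtain ⟨y, hy, rfl⟩ := Submodule.mem_map.mp hx
        have hmm := pow_mem hb4' k (k : ℤ) y hy
        have hidx : (k : ℤ) - 2 * k = -(k : ℤ) := by ring
        rwa [hidx] at hmm
      · intro x hx
        obtain ⟨w, hw, rfl⟩ := (hmemMb' _ _).mp hx
        rw [← hb5 k] at hw
        obtain ⟨s, hs, t, ht, hst⟩ := Submodule.mem_sup.mp hw
        obtain ⟨u, hu, rfl⟩ := Submodule.mem_map.mp hs
        have huA : u ∈ A := hMbA (k : ℤ) (by push_cast; omega) hu
        have htA : t ∈ A := hMbA (-(k : ℤ) - 1) (by omega) ht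
        have hsA : (N ^ k) u ∈ A := hApow k u huA
        have hwd : w = (⟨(N ^ k) u, hsA⟩ : A) + ⟨t, htA⟩ := by
          ext
          simp only [Submodule.coe_add]
          exact hst.symm
        rw [hwd, map_add]
        refine Submodule.mem_sup.mpr ⟨_, ?_, _, ?_, rfl⟩
        · rw [hπcoe k u huA hsA]
          exact Submodule.mem_map_of_mem ((hmemMb' _ _).mpr ⟨⟨u, huA⟩, hu, rfl⟩)
        · exact (hmemMb' _ _).mpr ⟨⟨t, htA⟩, ht, rfl⟩
  have hb6' : ∀ k : ℕ, ∀ x ∈ Mb' (k : ℤ), (N' ^ k) x ∈ Mb' (-(k : ℤ) - 1) →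
      x ∈ Mb' ((k : ℤ) - 1) := by
    intro k x hx hNx
    by_cases hk : e ≤ k
    · rw [hMb'top ((k : ℤ) - 1) (by push_cast; omega)]; trivial
    · obtain ⟨w, hw, rfl⟩ := (hmemMb' _ _).mp hx
      rw [hπpow k w] at hNx
      obtain ⟨m, hm, hmeq⟩ := (hmemMb' _ _).mp hNx
      have hdiff : ((Nr ^ k) w - m : A) ∈ Submodule.comap A.subtype B := by
        rw [← Submodule.ker_mkQ (Submodule.comap A.subtype B), ← hπ,
          LinearMap.sub_mem_ker_iff]
        exact hmeq.symm
      have hdiffB : (((Nr ^ k) w : A) : V) - (m : V) ∈ B := by simpa using hdiff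
      have hNkw : (N ^ k) (w : V) ∈ Mb (-(k : ℤ) - 1) := by
        rw [← hcoe k w]
        have hsplit : (((Nr ^ k) w : A) : V)
            = ((((Nr ^ k) w : A) : V) - (m : V)) + (m : V) := by abel
        rw [hsplit]
        exact Submodule.add_mem _ (hBMb (-(k : ℤ) - 1) (by push_cast; omega) hdiffB) hm
      exact (hmemMb' _ _).mpr ⟨w, hb6 k (w : V) hw hNkw, rfl⟩
  have hMb'eq : Mb' = M' := huniq' Mb'
    ⟨hb'mono, ⟨-(e : ℤ), fun i hi => hMb'bot i hi⟩, ⟨(e : ℤ) - 1, fun i hi => hMb'top i hi⟩,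
      hb4', hb5', hb6'⟩
  funext i
  by_cases h1 : (e : ℤ) ≤ i
  · rw [hbtop i h1, hMtop i h1]
  by_cases h2 : i ≤ -(e : ℤ) - 1
  · rw [hbbot i h2, hMbot i h2]
  · rw [hMmid i (by omega) (by omega), ← hMb'eq]
    refine le_antisymm ?_ ?_
    · intro v hv
      have hvA : v ∈ A := hMbA i (by omega) hv
      rw [hmemL]
      exact ⟨hvA, (hmemMb' _ _).mpr ⟨⟨v, hvA⟩, hv, rfl⟩⟩
    · intro v hv
      rw [hmemL] at hv
      obtain ⟨hvA, hS⟩ := hv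
      obtain ⟨w, hw, hweq⟩ := (hmemMb' _ _).mp hS
      have hdiff : ((⟨v, hvA⟩ : A) - w) ∈ Submodule.comap A.subtype B := by
        rw [← Submodule.ker_mkQ (Submodule.comap A.subtype B), ← hπ,
          LinearMap.sub_mem_ker_iff]
        exact hweq.symm
      have hdiffB : v - (w : V) ∈ B := by simpa using hdiff
      have hsplit : v = (v - (w : V)) + (w : V) := by abel
      rw [hsplit]
      exact Submodule.add_mem _ (hBMb i (by omega) hdiffB) hw


lemma exun_aux :
    ∀ (n : ℕ) (V : Type) [AddCommGroup V] [Module K V] (N : Module.End K V),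
      N ^ n = 0 → ∃! M : ℤ → Submodule K V, IsMonodromyFiltration N M := by
  intro n
  induction n with
  | zero =>
    intro V _ _ N hn
    have hN0 : N = 0 := by
      have h1 : (1 : Module.End K V) = 0 := by simpa using hn
      calc N = N * 1 := (mul_one N).symm
        _ = 0 := by rw [h1, mul_zero]
    rw [hN0]
    exact exun_zero
  | succ e ih =>
    intro V _ _ N hn
    by_cases he0 : e = 0
    · subst he0
      rw [pow_one] at hn
      rw [hn]
      exact exun_zero
    · exact exun_step N e (by omega) hn (fun W _ _ Nw hw => ih W Nw hw)

end MonodromyAux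

/-- every nilpotent endomorphism of a finite-dimensional vector space has a
unique monodromy filtration. -/
theorem existsUnique_monodromyFiltration
    {K V : Type} [Field K] [AddCommGroup V] [Module K V] [FiniteDimensional K V]
    (N : Module.End K V) (hN : IsNilpotent N) :
    ∃! M : ℤ → Submodule K V, IsMonodromyFiltration N M := by
  obtain ⟨n, hn⟩ := hN
  exact MonodromyAux.exun_aux n V N hn
end

section
/- Let m, M ≥ 1, let t₁ ≤ t₂ ≤ … ≤ t_m and s₁, …, s_M be positive integers with s_k ≤ t_m for all k, let u₁, …, u_m and w be integers, and let S be a finite multiset of integers which equals both (a) the multiset union over i = 1, …, m of {u_i − 2j : 0 ≤ j ≤ t_i − 1}, and (b) the multiset union over k = 1, …, M of {w + s_k − 1 − 2j : 0 ≤ j ≤ s_k − 1}. Then u_m = w + t_m − 1. -/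
/-- if a finite multiset `S` of integers admits both the description
`⋃_i {u i - 2j : 0 ≤ j ≤ t i - 1}` (with `t` increasing) and the pure description
`⋃_k {w + s k - 1 - 2j : 0 ≤ j ≤ s k - 1}` with all `s k ≤ t_max`, then the top weight
satisfies `u_max = w + t_max - 1`. -/
theorem top_weight_of_pure_multiset
    {m M : ℕ} (t : Fin (m + 1) → ℕ) (s : Fin (M + 1) → ℕ)
    (htmono : Monotone t) (htpos : ∀ i, 0 < t i) (hspos : ∀ k, 0 < s k)
    (hsle : ∀ k, s k ≤ t (Fin.last m))
    (u : Fin (m + 1) → ℤ) (w : ℤ) (S : Multiset ℤ)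
    (ha : S = ∑ i : Fin (m + 1), (Multiset.range (t i)).map (fun j => u i - 2 * (j : ℤ)))
    (hb : S = ∑ k : Fin (M + 1),
      (Multiset.range (s k)).map (fun j => w + (s k : ℤ) - 1 - 2 * (j : ℤ))) :
    u (Fin.last m) = w + (t (Fin.last m) : ℤ) - 1 := by
  simp only [bind, Multiset.pure_def, Multiset.bind_def, Multiset.bind_singleton,
    Multiset.map_map, Function.comp] at ha hb
  set T : ℕ := t (Fin.last m) with hT
  -- every element of S is within [w - T + 1, w + T - 1]
  have hbound : ∀ x ∈ S, w - (T : ℤ) + 1 ≤ x ∧ x ≤ w + (T : ℤ) - 1 := by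
    intro x hx
    rw [hb, Multiset.mem_sum] at hx
    obtain ⟨k, -, hk⟩ := hx
    simp only [Multiset.mem_map, Multiset.mem_range] at hk
    obtain ⟨j, hj, rfl⟩ := hk
    have hs1 : (1 : ℤ) ≤ (s k : ℤ) := by exact_mod_cast hspos k
    have hsT : (s k : ℤ) ≤ (T : ℤ) := by exact_mod_cast hsle k
    have hjlt : (j : ℤ) ≤ (s k : ℤ) - 1 := by
      have : (j : ℤ) < (s k : ℤ) := by exact_mod_cast hj
      omega
    constructor <;> omega
  -- membership of the two extreme elements of the top block
  have hmem : ∀ j : ℕ, j < T → u (Fin.last m) - 2 * (j : ℤ) ∈ S := by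
    intro j hj
    rw [ha, Multiset.mem_sum]
    refine ⟨Fin.last m, Finset.mem_univ _, ?_⟩
    simp only [Multiset.mem_map, Multiset.mem_range]
    exact ⟨j, hj, rfl⟩
  have hTpos : 0 < T := htpos _
  have h1 := hbound _ (hmem 0 hTpos)
  have h2 := hbound _ (hmem (T - 1) (by omega))
  have hcast : ((T - 1 : ℕ) : ℤ) = (T : ℤ) - 1 := by
    have : (1 : ℤ) ≤ (T : ℤ) := by exact_mod_cast hTpos
    push_cast [Nat.cast_sub hTpos]
    ring
  rw [hcast] at h2
  push_cast at h1 h2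
  omega
end

section
/- Let m, M ≥ 1, let t₁ ≤ … ≤ t_m and s₁ ≤ … ≤ s_M be positive integers with s_M ≤ t_m, and suppose a finite multiset S of integers admits both descriptions S = ⋃_{i=1}^m {u_i − 2j : 0 ≤ j ≤ t_i − 1} = ⋃_{k=1}^M {w + s_k − 1 − 2j : 0 ≤ j ≤ s_k − 1} for some integers u_i and w. Then the maximum element of S minus the minimum element of S is at most 2(t_m − 1), and if moreover this difference equals u_m − (u_m − 2(t_m − 1)) = 2(t_m − 1), then s_M = t_m. -/
/-- with `S` admitting both descriptions as in the previous setting (with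
`t` and `s` increasing and `s_max ≤ t_max`), the gap between any two elements of `S` is
at most `2 (t_max - 1)`, and if this maximal gap is attained then `s_max = t_max`. -/
theorem size_of_pure_specialization
    {m M : ℕ} (t : Fin (m + 1) → ℕ) (s : Fin (M + 1) → ℕ)
    (htmono : Monotone t) (hsmono : Monotone s)
    (htpos : ∀ i, 0 < t i) (hspos : ∀ k, 0 < s k)
    (hsle : s (Fin.last M) ≤ t (Fin.last m))
    (u : Fin (m + 1) → ℤ) (w : ℤ) (S : Multiset ℤ)
    (ha : S = ∑ i : Fin (m + 1), (Multiset.range (t i)).map (fun j => u i - 2 * (j : ℤ)))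
    (hb : S = ∑ k : Fin (M + 1),
      (Multiset.range (s k)).map (fun j => w + (s k : ℤ) - 1 - 2 * (j : ℤ))) :
    (∀ x ∈ S, ∀ y ∈ S, x - y ≤ 2 * ((t (Fin.last m) : ℤ) - 1)) ∧
    ((∃ x ∈ S, ∃ y ∈ S, x - y = 2 * ((t (Fin.last m) : ℤ) - 1)) →
      s (Fin.last M) = t (Fin.last m)) := by
  have key : ∀ x ∈ S, w - ((s (Fin.last M) : ℤ) - 1) ≤ x ∧
      x ≤ w + ((s (Fin.last M) : ℤ) - 1) := by
    intro x hx
    rw [hb, Multiset.mem_sum] at hx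
    obtain ⟨k, -, hk⟩ := hx
    rw [Multiset.mem_map] at hk
    obtain ⟨j, hj, rfl⟩ := hk
    obtain ⟨a, ha', rfl⟩ : ∃ a, a < s k ∧ (a : ℤ) = j := by
      simpa [Multiset.mem_range] using hj
    have hks : s k ≤ s (Fin.last M) := hsmono (Fin.le_last k)
    have hk1 : 1 ≤ s k := hspos k
    constructor <;> push_cast <;> omega
  have gap : ∀ x ∈ S, ∀ y ∈ S, x - y ≤ 2 * ((s (Fin.last M) : ℤ) - 1) := by
    intro x hx y hy
    obtain ⟨_, hx2⟩ := key x hx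
    obtain ⟨hy1, _⟩ := key y hy
    omega
  constructor
  · intro x hx y hy
    have := gap x hx y hy
    have : (s (Fin.last M) : ℤ) ≤ t (Fin.last m) := by exact_mod_cast hsle
    omega
  · rintro ⟨x, hx, y, hy, hxy⟩
    have h1 := gap x hx y hy
    have h2 : (s (Fin.last M) : ℤ) ≤ t (Fin.last m) := by exact_mod_cast hsle
    have : (s (Fin.last M) : ℤ) = t (Fin.last m) := by omega
    exact_mod_cast this
end

section
/- Let K be an algebraically closed field, A, N ∈ End(K^n) with A invertible, N nilpotent, c ∈ K nonzero, and A N A⁻¹ = c·N. Write A = s·u for the Jordan–Chevalley decomposition of A (s semisimple, u unipotent, commuting). Then s N s⁻¹ = c·N and u N u⁻¹ = N, i.e., u commutes with N. -/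
/-!
Write `T_a X = a X - c X a`. The relation says `T_{su} N = 0`. Since `s` and `u` commute and `u`
is unipotent, `T_{su} - T_s = T_{s(u-1)}` is a nilpotent operator commuting with `T_s`, so `N` is
killed by a power of `T_s`. In a basis diagonalising `s`, `T_s` acts on matrix entries by the
scalars `d_i - c d_j`, so a power of `T_s` has the same kernel as `T_s`; hence `s N = c N s`.
Cancelling `s` from `s u N = c N s u = s N u` gives `u N = N u`.
-/

lemma Module.End.exists_pow_apply_eq_zero_of_commute_of_isNilpotent_sub
    {R M : Type*} [Semiring R] [AddCommGroup M] [Module R M] {f g : Module.End R M}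
    (hfg : Commute f g) (hnil : IsNilpotent (f - g)) {x : M} (hx : f x = 0) :
    ∃ k, (g ^ k) x = 0 := by
  have hgx : (g - f) x = g x := by simp [hx]
  have hpow : ∀ k, (g ^ k) x = ((g - f) ^ k) x := by
    intro k
    induction k with
    | zero => rfl
    | succ k ih =>
      have hcomm : Commute ((g - f) ^ k) g := ((Commute.refl g).sub_left hfg).pow_left k
      calc (g ^ (k + 1)) x = g (((g - f) ^ k) x) := by rw [pow_succ', mul_apply, ih]
        _ = ((g - f) ^ (k + 1)) x := by
          rw [pow_succ, mul_apply, hgx, ← mul_apply, ← mul_apply, hcomm.eq]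
  obtain ⟨k, hk⟩ := hnil.neg
  exact ⟨k, by rw [hpow, ← neg_sub, hk, LinearMap.zero_apply]⟩

section TwistedCommutator

variable {K 𝔄 : Type*} [CommRing K] [Ring 𝔄] [Algebra K 𝔄] (c : K)

def twistedCommutator (a : 𝔄) : Module.End K 𝔄 :=
  LinearMap.mulLeft K a - c • LinearMap.mulRight K a

variable {c}

@[simp]
lemma twistedCommutator_apply (a x : 𝔄) : twistedCommutator c a x = a * x - c • (x * a) := rfl

lemma twistedCommutator_sub (a b : 𝔄) :
    twistedCommutator c (a - b) = twistedCommutator c a - twistedCommutator c b := by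
  ext x
  simp only [twistedCommutator_apply, LinearMap.sub_apply, sub_mul, mul_sub, smul_sub]
  abel

lemma twistedCommutator_units_eq_zero_iff (a : 𝔄ˣ) (x : 𝔄) :
    twistedCommutator c (a : 𝔄) x = 0 ↔ (a : 𝔄) * x * ↑a⁻¹ = c • x := by
  rw [twistedCommutator_apply, sub_eq_zero, Units.mul_inv_eq_iff_eq_mul, smul_mul_assoc]

lemma Commute.twistedCommutator {a b : 𝔄} (h : Commute a b) :
    Commute (twistedCommutator c a) (twistedCommutator c b) := by
  ext x
  simp only [Module.End.mul_apply, twistedCommutator_apply, mul_sub, sub_mul, mul_smul_comm,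
    smul_mul_assoc, smul_sub, smul_smul, mul_assoc, h.eq, h.left_comm, mul_comm c]
  abel

lemma IsNilpotent.twistedCommutator {a : 𝔄} (h : IsNilpotent a) :
    IsNilpotent (twistedCommutator c a) :=
  ((LinearMap.commute_mulLeft_right a a).smul_right c).isNilpotent_sub
    ((LinearMap.isNilpotent_mulLeft_iff K a).mpr h)
    (((LinearMap.isNilpotent_mulRight_iff K a).mpr h).smul c)

lemma map_twistedCommutator_pow {𝔅 F : Type*} [Ring 𝔅] [Algebra K 𝔅] [FunLike F 𝔄 𝔅]
    [AlgHomClass F K 𝔄 𝔅] (σ : F) (a x : 𝔄) (k : ℕ) :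
    σ ((twistedCommutator c a ^ k) x) = (twistedCommutator c (σ a) ^ k) (σ x) := by
  induction k with
  | zero => rfl
  | succ k ih => simp [pow_succ', Module.End.mul_apply, ih]

lemma exists_pow_twistedCommutator_apply_eq_zero {s u x : 𝔄} (hsu : Commute s u)
    (hu : IsNilpotent (u - 1)) (hx : twistedCommutator c (s * u) x = 0) :
    ∃ k, (twistedCommutator c s ^ k) x = 0 := by
  have hnil : IsNilpotent (twistedCommutator c (s * u) - twistedCommutator c s) := by
    rw [← twistedCommutator_sub, ← mul_sub_one]
    exact ((hsu.sub_right (Commute.one_right s)).isNilpotent_mul_left hu).twistedCommutator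
  exact Module.End.exists_pow_apply_eq_zero_of_commute_of_isNilpotent_sub
    ((Commute.refl s).mul_left hsu.symm).twistedCommutator hnil hx

lemma commute_of_twistedCommutator_eq_zero {s u x : 𝔄} (hs : IsUnit s)
    (hsx : twistedCommutator c s x = 0) (hsux : twistedCommutator c (s * u) x = 0) :
    Commute u x := by
  rw [twistedCommutator_apply, sub_eq_zero] at hsx hsux
  refine hs.mul_left_cancel ?_
  rw [← mul_assoc, hsux, ← mul_assoc, ← smul_mul_assoc, ← hsx, mul_assoc]

end TwistedCommutator

section Diagonal

open Matrix

variable {K ι : Type*} [CommRing K] [Fintype ι] [DecidableEq ι]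

lemma twistedCommutator_diagonal_apply (c : K) (d : ι → K) (X : Matrix ι ι K) (i j : ι) :
    twistedCommutator c (diagonal d) X i j = (d i - c * d j) * X i j := by
  simp only [twistedCommutator_apply, Matrix.sub_apply, Matrix.smul_apply, diagonal_mul,
    mul_diagonal, smul_eq_mul]
  ring

lemma twistedCommutator_diagonal_pow_apply (c : K) (d : ι → K) (X : Matrix ι ι K) (k : ℕ)
    (i j : ι) : ((twistedCommutator c (diagonal d) ^ k) X) i j = (d i - c * d j) ^ k * X i j := by
  induction k with
  | zero => simp
  | succ k ih => rw [pow_succ', Module.End.mul_apply, twistedCommutator_diagonal_apply, ih]; ring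

variable [IsReduced K]

lemma twistedCommutator_diagonal_eq_zero_of_pow {c : K} {d : ι → K} {X : Matrix ι ι K} {k : ℕ}
    (h : (twistedCommutator c (diagonal d) ^ k) X = 0) :
    twistedCommutator c (diagonal d) X = 0 := by
  ext i j
  have hk := congrFun₂ h i j
  rw [twistedCommutator_diagonal_pow_apply, Matrix.zero_apply] at hk
  rw [twistedCommutator_diagonal_apply, Matrix.zero_apply]
  generalize d i - c * d j = e at hk ⊢
  refine eq_zero_of_pow_eq_zero (n := k + 1) ?_
  linear_combination e * X i j ^ k * hk

lemma twistedCommutator_eq_zero_of_pow_of_isDiag {c : K} {s X : Matrix ι ι K} {k : ℕ}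
    (P : (Matrix ι ι K)ˣ) (hP : (P⁻¹.val * s * P.val).IsDiag)
    (h : (twistedCommutator c s ^ k) X = 0) :
    twistedCommutator c s X = 0 := by
  let σ := MulSemiringAction.toAlgEquiv K (Matrix ι ι K) (ConjAct.toConjAct P⁻¹)
  have hσs : σ s = diagonal (P⁻¹.val * s * P.val).diag := by
    rw [hP.diagonal_diag]
    simp [σ, ConjAct.units_smul_def]
  rw [← map_eq_zero_iff σ σ.injective, ← pow_one (twistedCommutator c s),
    map_twistedCommutator_pow, hσs]
  refine twistedCommutator_diagonal_eq_zero_of_pow (k := k) ?_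
  rw [← hσs, ← map_twistedCommutator_pow, h, map_zero]

end Diagonal

theorem jordan_parts_twisted_commutation_general
    {K : Type} [Field K] {n : ℕ}
    (s u : (Matrix (Fin n) (Fin n) K)ˣ) (N : Matrix (Fin n) (Fin n) K) (c : K)
    (hdiag : ∃ P : (Matrix (Fin n) (Fin n) K)ˣ,
      Matrix.IsDiag (((P⁻¹ : (Matrix (Fin n) (Fin n) K)ˣ) : Matrix (Fin n) (Fin n) K)
        * (s : Matrix (Fin n) (Fin n) K) * (P : Matrix (Fin n) (Fin n) K)))
    (huni : IsNilpotent ((u : Matrix (Fin n) (Fin n) K) - 1))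
    (hcomm : Commute (s : Matrix (Fin n) (Fin n) K) (u : Matrix (Fin n) (Fin n) K))
    (hrel : ((s * u : (Matrix (Fin n) (Fin n) K)ˣ) : Matrix (Fin n) (Fin n) K) * N *
        (((s * u)⁻¹ : (Matrix (Fin n) (Fin n) K)ˣ) : Matrix (Fin n) (Fin n) K) = c • N) :
    (s : Matrix (Fin n) (Fin n) K) * N *
        ((s⁻¹ : (Matrix (Fin n) (Fin n) K)ˣ) : Matrix (Fin n) (Fin n) K) = c • N ∧
    (u : Matrix (Fin n) (Fin n) K) * N = N * (u : Matrix (Fin n) (Fin n) K) := by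
  obtain ⟨P, hP⟩ := hdiag
  have hsu : twistedCommutator c ((s : Matrix (Fin n) (Fin n) K) * u) N = 0 := by
    rw [← Units.val_mul, twistedCommutator_units_eq_zero_iff]
    exact hrel
  obtain ⟨k, hk⟩ := exists_pow_twistedCommutator_apply_eq_zero hcomm huni hsu
  have hs := twistedCommutator_eq_zero_of_pow_of_isDiag P hP hk
  exact ⟨(twistedCommutator_units_eq_zero_iff s N).mp hs,
    (commute_of_twistedCommutator_eq_zero s.isUnit hs hsu).eq⟩

/-- if `A = s * u` is the multiplicative Jordan–Chevalley decomposition of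
an invertible matrix `A` satisfying `A N A⁻¹ = c • N` with `N` nilpotent and `c ≠ 0`,
then the semisimple part satisfies `s N s⁻¹ = c • N` and the unipotent part commutes
with `N`. -/
theorem jordan_parts_twisted_commutation
    {K : Type} [Field K] [IsAlgClosed K] {n : ℕ}
    (s u : (Matrix (Fin n) (Fin n) K)ˣ) (N : Matrix (Fin n) (Fin n) K) (c : K)
    (hc : c ≠ 0) (hN : IsNilpotent N)
    (hdiag : ∃ P : (Matrix (Fin n) (Fin n) K)ˣ,
      Matrix.IsDiag (((P⁻¹ : (Matrix (Fin n) (Fin n) K)ˣ) : Matrix (Fin n) (Fin n) K)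
        * (s : Matrix (Fin n) (Fin n) K) * (P : Matrix (Fin n) (Fin n) K)))
    (huni : IsNilpotent ((u : Matrix (Fin n) (Fin n) K) - 1))
    (hcomm : Commute (s : Matrix (Fin n) (Fin n) K) (u : Matrix (Fin n) (Fin n) K))
    (hrel : ((s * u : (Matrix (Fin n) (Fin n) K)ˣ) : Matrix (Fin n) (Fin n) K) * N *
        (((s * u)⁻¹ : (Matrix (Fin n) (Fin n) K)ˣ) : Matrix (Fin n) (Fin n) K) = c • N) :
    (s : Matrix (Fin n) (Fin n) K) * N *
        ((s⁻¹ : (Matrix (Fin n) (Fin n) K)ˣ) : Matrix (Fin n) (Fin n) K) = c • N ∧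
    (u : Matrix (Fin n) (Fin n) K) * N = N * (u : Matrix (Fin n) (Fin n) K) :=
  jordan_parts_twisted_commutation_general s u N c hdiag huni hcomm hrel
end

section
/- Let R be a commutative domain of characteristic zero, K a field, f : R → K a ring homomorphism, and N a nilpotent n × n matrix over R. Suppose that for every j ≥ 1, the rank of f(N)^j over K equals the rank of N^j over Frac(R). Then for any field L and any ring homomorphism g : R → L whose kernel is contained in the kernel of f (i.e., f factors through g up to a homomorphism on images), the rank of g(N)^j over L also equals the rank of N^j over Frac(R), for every j ≥ 1. -/
/-!
The rank of a matrix over a field is the largest size of a nonvanishing minor. Minors commute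
with ring homomorphisms, so a minor that survives `f` survives `g` when `ker g ≤ ker f`, and
any minor surviving `g` survives the injective map into the fraction field. Hence
`rank f(N)^j ≤ rank g(N)^j ≤ rank N^j`, and the outer ranks agree by hypothesis.
-/

namespace Matrix

variable {m n F : Type*} [Fintype m] [Fintype n] [Field F]

theorem exists_linearIndependent_rows_of_le_rank (A : Matrix m n F) {r : ℕ} (hr : r ≤ A.rank) :
    ∃ row : Fin r → m, LinearIndependent F fun i => A (row i) := by
  obtain ⟨κ, a, ha, hspan, hli⟩ := exists_linearIndependent' F A
  have : Finite κ := Finite.of_injective a ha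
  have := Fintype.ofFinite κ
  have hcard : Fintype.card κ = A.rank := by
    rw [linearIndependent_iff_card_eq_finrank_span.mp hli, Set.finrank, hspan,
      rank_eq_finrank_span_row]
    rfl
  obtain ⟨emb⟩ : Nonempty (Fin r ↪ κ) :=
    Function.Embedding.nonempty_of_card_le (by rwa [Fintype.card_fin, hcard])
  exact ⟨a ∘ emb, hli.comp emb emb.injective⟩

theorem le_rank_iff_exists_submatrix_det_ne_zero (A : Matrix m n F) {r : ℕ} :
    r ≤ A.rank ↔ ∃ (row : Fin r → m) (col : Fin r → n), (A.submatrix row col).det ≠ 0 := by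
  constructor
  · intro hr
    obtain ⟨row, hrow⟩ := A.exists_linearIndependent_rows_of_le_rank hr
    have hcols : r ≤ (A.submatrix row id)ᵀ.rank := by
      rw [rank_transpose, LinearIndependent.rank_matrix (M := A.submatrix row id) hrow,
        Fintype.card_fin]
    obtain ⟨col, hcol⟩ := (A.submatrix row id)ᵀ.exists_linearIndependent_rows_of_le_rank hcols
    refine ⟨row, col, ?_⟩
    rw [← det_transpose, ← isUnit_iff_ne_zero, ← isUnit_iff_isUnit_det,
      ← linearIndependent_rows_iff_isUnit]
    exact hcol
  · rintro ⟨row, col, hdet⟩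
    calc r = (A.submatrix row col).rank := by rw [rank_of_det_ne_zero hdet, Fintype.card_fin]
      _ ≤ A.rank := rank_submatrix_le A row col

theorem rank_map_le_rank_map_of_ker_le {D K L : Type*} [CommRing D] [Field K] [Field L]
    (h : D →+* K) (e : D →+* L) (hker : RingHom.ker e ≤ RingHom.ker h) (A : Matrix m n D) :
    (A.map h).rank ≤ (A.map e).rank := by
  obtain ⟨row, col, hdet⟩ := (A.map h).le_rank_iff_exists_submatrix_det_ne_zero.mp le_rfl
  refine (A.map e).le_rank_iff_exists_submatrix_det_ne_zero.mpr ⟨row, col, ?_⟩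
  rw [submatrix_map, ← RingHom.mapMatrix_apply, ← RingHom.map_det] at hdet ⊢
  exact fun h0 => hdet (hker h0)

end Matrix

theorem rank_pow_constant_of_factoring_specialization_general
    {R K L : Type} [CommRing R] [IsDomain R] [Field K] [Field L]
    (f : R →+* K) (g : R →+* L) (hker : RingHom.ker g ≤ RingHom.ker f)
    {n : ℕ} (N : Matrix (Fin n) (Fin n) R)
    (hf : ∀ j : ℕ, 1 ≤ j →
      ((N.map f) ^ j).rank = ((N.map (algebraMap R (FractionRing R))) ^ j).rank) :
    ∀ j : ℕ, 1 ≤ j →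
      ((N.map g) ^ j).rank = ((N.map (algebraMap R (FractionRing R))) ^ j).rank := by
  intro j hj
  have hgeneric : RingHom.ker (algebraMap R (FractionRing R)) ≤ RingHom.ker g := by
    rw [(RingHom.injective_iff_ker_eq_bot _).mp (IsFractionRing.injective R (FractionRing R))]
    exact bot_le
  have hf_le_g := (N ^ j).rank_map_le_rank_map_of_ker_le f g hker
  have hg_le_generic := (N ^ j).rank_map_le_rank_map_of_ker_le g _ hgeneric
  have hf_eq_generic := hf j hj
  simp only [← Matrix.map_pow] at hf_eq_generic ⊢
  omega

/-- let `N` be a nilpotent matrix over a characteristic-zero domain `R`.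
If the ranks of all powers of `N` are preserved by the specialization `f : R → K`, then
they are preserved by every specialization `g : R → L` with `ker g ⊆ ker f`. -/
theorem rank_pow_constant_of_factoring_specialization
    {R K L : Type} [CommRing R] [IsDomain R] [CharZero R] [Field K] [Field L]
    (f : R →+* K) (g : R →+* L) (hker : RingHom.ker g ≤ RingHom.ker f)
    {n : ℕ} (N : Matrix (Fin n) (Fin n) R) (hN : IsNilpotent N)
    (hf : ∀ j : ℕ, 1 ≤ j →
      ((N.map f) ^ j).rank = ((N.map (algebraMap R (FractionRing R))) ^ j).rank) :
    ∀ j : ℕ, 1 ≤ j →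
      ((N.map g) ^ j).rank = ((N.map (algebraMap R (FractionRing R))) ^ j).rank :=
  rank_pow_constant_of_factoring_specialization_general f g hker N hf
end
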